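/- If W is a real d×d matrix such that h(W ∘ W) = 0 (where W ∘ W is the entrywise square and h(A) = Σ_{p=1}^d c_p tr(A^p) with c_p > 0), then the gradient ∇_W h(W ∘ W) = 2 ∇h(W∘W) ∘ W equals the zero matrix. -/
import Mathlib


open Matrix

/-- `h(A) = Σ_{p=1}^d c_p tr(A^p)`. -/
noncomputable def hsum {d : ℕ} (c : ℕ → ℝ) (A : Matrix (Fin d) (Fin d) ℝ) : ℝ :=
  ∑ p ∈ Finset.Icc 1 d, c p * (A ^ p).trace

/-- The gradient `∇h(A) = Σ_{p=1}^d p c_p (A^{p-1})ᵀ`. -/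
noncomputable def gradh {d : ℕ} (c : ℕ → ℝ) (A : Matrix (Fin d) (Fin d) ℝ) :
    Matrix (Fin d) (Fin d) ℝ :=
  ∑ p ∈ Finset.Icc 1 d, ((p : ℝ) * c p) • (A ^ (p - 1))ᵀ

lemma pow_entry_nonneg {d : ℕ} (A : Matrix (Fin d) (Fin d) ℝ)
    (hA : ∀ i j, 0 ≤ A i j) (m : ℕ) : ∀ i j, 0 ≤ (A ^ m) i j := by
  induction m with
  | zero => intro i j; simp [Matrix.one_apply]; positivity
  | succ m ih =>
    intro i j
    rw [pow_succ, Matrix.mul_apply]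
    exact Finset.sum_nonneg fun k _ => mul_nonneg (ih i k) (hA k j)

theorem stmt10 {d : ℕ} (c : ℕ → ℝ) (hc : ∀ p ∈ Finset.Icc 1 d, 0 < c p)
    (W : Matrix (Fin d) (Fin d) ℝ)
    (hfeas : hsum c (Matrix.hadamard W W) = 0) :
    (2 : ℝ) • Matrix.hadamard (gradh c (Matrix.hadamard W W)) W = 0 := by
  set A := Matrix.hadamard W W with hAdef
  have hA : ∀ i j, 0 ≤ A i j := fun i j => mul_self_nonneg (W i j)
  have hpow := pow_entry_nonneg A hA
  -- each trace is zero
  have htr : ∀ p ∈ Finset.Icc 1 d, (A ^ p).trace = 0 := by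
    intro p hp
    have hterm : ∀ q ∈ Finset.Icc 1 d, 0 ≤ c q * (A ^ q).trace := by
      intro q hq
      exact mul_nonneg (hc q hq).le
        (Finset.sum_nonneg fun i _ => hpow q i i)
    have := (Finset.sum_eq_zero_iff_of_nonneg hterm).mp hfeas p hp
    rcases mul_eq_zero.mp this with h | h
    · exact absurd h (hc p hp).ne'
    · exact h
  -- each product (A^{p-1})_{ji} * A_{ij} is zero
  have hprod : ∀ p ∈ Finset.Icc 1 d, ∀ i j, (A ^ (p - 1)) j i * A i j = 0 := by
    intro p hp i j
    have hp1 : p - 1 + 1 = p := Nat.succ_pred_eq_of_pos (Finset.mem_Icc.mp hp).1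
    have hdiag : (A ^ p) j j = 0 := by
      have := htr p hp
      have hdn : ∀ i ∈ Finset.univ, 0 ≤ (A ^ p) i i := fun i _ => hpow p i i
      exact (Finset.sum_eq_zero_iff_of_nonneg hdn).mp this j (Finset.mem_univ j)
    have hexp : (A ^ p) j j = ∑ k, (A ^ (p - 1)) j k * A k j := by
      conv_lhs => rw [← hp1, pow_succ]
      rw [Matrix.mul_apply]
    have hterms : ∀ k ∈ Finset.univ, 0 ≤ (A ^ (p - 1)) j k * A k j :=
      fun k _ => mul_nonneg (hpow _ j k) (hA k j)
    have := (Finset.sum_eq_zero_iff_of_nonneg hterms).mp (hexp ▸ hdiag) i (Finset.mem_univ i)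
    exact this
  -- conclude entrywise
  ext i j
  simp only [Matrix.smul_apply, Matrix.hadamard_apply, Matrix.zero_apply, gradh,
    Matrix.sum_apply, Matrix.smul_apply, Matrix.transpose_apply, smul_eq_mul]
  rw [Finset.sum_mul]
  rw [Finset.sum_eq_zero, mul_zero]
  intro p hp
  have hz : (A ^ (p - 1)) j i * W i j = 0 := by
    have h2 := hprod p hp i j
    have hAij : A i j = W i j * W i j := rfl
    rcases mul_eq_zero.mp h2 with h | h
    · rw [h, zero_mul]
    · rw [hAij] at h
      rw [mul_self_eq_zero.mp h, mul_zero]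
  rw [mul_assoc, hz, mul_zero]
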